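/- arXiv:2509.10497 — 5 statements merged into one kernel-verified Lean document; each statement's English description precedes it below -/
import Mathlib

section
/- Let Ω be a topological space, g : Ω × Ω → ℝ a continuous function satisfying (g1) g(r,u) = 0 implies r = u, (g2) |g(r,u)| = |g(u,r)|, and (g3) |g(r,u)| ≤ |g(r,t)| + |g(t,u)| for all r, u, t ∈ Ω, R a binary relation on Ω, and S : Ω → Ω a map such that: (i) Ω is g-R-complete; (ii) R is S-closed; (iii) there exists r₀ ∈ Ω with (r₀, S r₀) ∈ R; (iv) S is g-R-continuous; (v) S is a topologically R-preserving contraction with respect to g, i.e., there exists α ∈ (0,1) with |g(Sx, Sy)| ≤ α |g(x,y)| for all (x,y) ∈ R. Then S has a fixed point; moreover, for each r₀ ∈ Ω with (r₀, S r₀) ∈ R, the Picard sequence {Sⁿ r₀} g-converges to a fixed point of S. -/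
/-!
The Picard sequence `rₙ = Sⁿ r₀` is `R`-preserving because `R` is `S`-closed, so the contraction
gives `|g(rₙ, rₙ₊₁)| ≤ α ^ n |g(r₀, r₁)|`, and chaining the triangle inequality (g3) makes `rₙ`
`g`-Cauchy. By `g`-`R`-completeness it `g`-converges to some `x`; by `g`-`R`-continuity
`rₙ₊₁ = S rₙ` `g`-converges to `S x` as well, and `g`-limits are unique by (g1)–(g3), so `S x = x`.
-/

open Filter Finset Topology

section GDistance

variable {Ω : Type*} {g : Ω × Ω → ℝ}

theorem abs_g_le_sum_Ico (hg3 : ∀ r u t : Ω, |g (r, u)| ≤ |g (r, t)| + |g (t, u)|)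
    (r : ℕ → Ω) {m n : ℕ} (hmn : m < n) :
    |g (r m, r n)| ≤ ∑ i ∈ Ico m n, |g (r i, r (i + 1))| := by
  induction n, hmn using Nat.le_induction with
  | base => simp
  | succ n hmn ih =>
    rw [sum_Ico_succ_top (by omega)]
    exact (hg3 _ _ (r n)).trans (add_le_add ih le_rfl)

/-- `g (x, x)` need not vanish, so the case `m = n` is handled by a detour through `r (n + 1)`. -/
theorem abs_g_le_two_mul_sum_Ico (hg2 : ∀ r u : Ω, |g (r, u)| = |g (u, r)|)
    (hg3 : ∀ r u t : Ω, |g (r, u)| ≤ |g (r, t)| + |g (t, u)|)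
    (r : ℕ → Ω) {m n : ℕ} (hmn : m ≤ n) :
    |g (r m, r n)| ≤ 2 * ∑ i ∈ Ico m (n + 1), |g (r i, r (i + 1))| := by
  have hfar := abs_g_le_sum_Ico hg3 r (Nat.lt_succ_of_le hmn)
  have hback : |g (r (n + 1), r n)| ≤ ∑ i ∈ Ico m (n + 1), |g (r i, r (i + 1))| := by
    rw [hg2]
    exact single_le_sum (f := fun i => |g (r i, r (i + 1))|) (fun i _ => abs_nonneg _) (mem_Ico.2 ⟨hmn, n.lt_succ_self⟩)
  linarith [hg3 (r m) (r n) (r (n + 1))]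

theorem tendsto_abs_g_of_abs_g_succ_le_geometric (hg2 : ∀ r u : Ω, |g (r, u)| = |g (u, r)|)
    (hg3 : ∀ r u t : Ω, |g (r, u)| ≤ |g (r, t)| + |g (t, u)|)
    {r : ℕ → Ω} {C α : ℝ} (hα0 : 0 ≤ α) (hα1 : α < 1)
    (hr : ∀ n, |g (r n, r (n + 1))| ≤ C * α ^ n) :
    Tendsto (fun p : ℕ × ℕ => |g (r p.1, r p.2)|) atTop (𝓝 0) := by
  have hC : 0 ≤ C := by simpa using (abs_nonneg _).trans (hr 0)
  have hle : ∀ m n, m ≤ n → |g (r m, r n)| ≤ 2 * C / (1 - α) * α ^ m := by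
    intro m n hmn
    calc |g (r m, r n)| ≤ 2 * ∑ i ∈ Ico m (n + 1), |g (r i, r (i + 1))| :=
          abs_g_le_two_mul_sum_Ico hg2 hg3 r hmn
      _ ≤ 2 * (C * ∑ i ∈ Ico m (n + 1), α ^ i) := by
          rw [mul_sum (a := C)]; gcongr with i; exact hr i
      _ ≤ 2 * (C * (α ^ m / (1 - α))) := by gcongr; exact geom_sum_Ico_le_of_lt_one hα0 hα1
      _ = 2 * C / (1 - α) * α ^ m := by ring
  have hmin : ∀ m n, |g (r m, r n)| ≤ 2 * C / (1 - α) * α ^ min m n := by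
    intro m n
    rcases le_total m n with h | h
    · rw [min_eq_left h]; exact hle m n h
    · rw [min_eq_right h, hg2]; exact hle n m h
  have htendsto_min : Tendsto (fun p : ℕ × ℕ => min p.1 p.2) atTop atTop :=
    tendsto_atTop_atTop.2 fun b => ⟨(b, b), fun p hp => le_min hp.1 hp.2⟩
  have hgeom := ((tendsto_pow_atTop_nhds_zero_of_lt_one hα0 hα1).comp htendsto_min).const_mul
    (2 * C / (1 - α))
  rw [mul_zero] at hgeom
  exact squeeze_zero (fun _ => abs_nonneg _) (fun p => hmin p.1 p.2) hgeom

theorem eq_of_tendsto_abs_g (hg1 : ∀ r u : Ω, g (r, u) = 0 → r = u)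
    (hg2 : ∀ r u : Ω, |g (r, u)| = |g (u, r)|)
    (hg3 : ∀ r u t : Ω, |g (r, u)| ≤ |g (r, t)| + |g (t, u)|)
    {r : ℕ → Ω} {x y : Ω} (hx : Tendsto (fun n => |g (r n, x)|) atTop (𝓝 0))
    (hy : Tendsto (fun n => |g (r n, y)|) atTop (𝓝 0)) : x = y := by
  have hle : ∀ n, |g (x, y)| ≤ |g (r n, x)| + |g (r n, y)| := fun n =>
    (hg3 x y (r n)).trans_eq (by rw [hg2 x (r n)])
  have hnonpos : |g (x, y)| ≤ 0 :=
    le_of_tendsto_of_tendsto' tendsto_const_nhds (by simpa using hx.add hy) hle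
  exact hg1 x y (abs_nonpos_iff.1 hnonpos)

end GDistance

section Picard

variable {Ω : Type*} {g : Ω × Ω → ℝ} {R : Ω → Ω → Prop} {S : Ω → Ω} {r₀ : Ω}

theorem rel_iterate_iterate_succ (hSclosed : ∀ x y : Ω, R x y → R (S x) (S y))
    (hr₀ : R r₀ (S r₀)) (n : ℕ) : R (S^[n] r₀) (S^[n + 1] r₀) := by
  induction n with
  | zero => exact hr₀
  | succ n ih =>
    rw [Function.iterate_succ_apply', Function.iterate_succ_apply' S (n + 1)]
    exact hSclosed _ _ ih

theorem abs_g_iterate_succ_le {α : ℝ} (hSclosed : ∀ x y : Ω, R x y → R (S x) (S y))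
    (hcontr : ∀ x y : Ω, R x y → |g (S x, S y)| ≤ α * |g (x, y)|) (hα0 : 0 ≤ α)
    (hr₀ : R r₀ (S r₀)) (n : ℕ) :
    |g (S^[n] r₀, S^[n + 1] r₀)| ≤ |g (r₀, S r₀)| * α ^ n := by
  induction n with
  | zero => simp
  | succ n ih =>
    rw [Function.iterate_succ_apply', Function.iterate_succ_apply' S (n + 1)]
    calc |g (S (S^[n] r₀), S (S^[n + 1] r₀))| ≤ α * |g (S^[n] r₀, S^[n + 1] r₀)| :=
          hcontr _ _ (rel_iterate_iterate_succ hSclosed hr₀ n)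
      _ ≤ α * (|g (r₀, S r₀)| * α ^ n) := by gcongr
      _ = |g (r₀, S r₀)| * α ^ (n + 1) := by ring

theorem exists_fixedPoint_tendsto_abs_g_iterate {α : ℝ}
    (hg1 : ∀ r u : Ω, g (r, u) = 0 → r = u)
    (hg2 : ∀ r u : Ω, |g (r, u)| = |g (u, r)|)
    (hg3 : ∀ r u t : Ω, |g (r, u)| ≤ |g (r, t)| + |g (t, u)|)
    (hcomplete : ∀ r : ℕ → Ω, (∀ n, R (r n) (r (n + 1))) →
      Tendsto (fun p : ℕ × ℕ => |g (r p.1, r p.2)|) atTop (𝓝 0) →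
      ∃ x : Ω, Tendsto (fun n => |g (r n, x)|) atTop (𝓝 0))
    (hSclosed : ∀ x y : Ω, R x y → R (S x) (S y))
    (hScont : ∀ (r : ℕ → Ω) (x : Ω), (∀ n, R (r n) (r (n + 1))) →
      Tendsto (fun n => |g (r n, x)|) atTop (𝓝 0) →
      Tendsto (fun n => |g (S (r n), S x)|) atTop (𝓝 0))
    (hα0 : 0 ≤ α) (hα1 : α < 1)
    (hcontr : ∀ x y : Ω, R x y → |g (S x, S y)| ≤ α * |g (x, y)|) (hr₀ : R r₀ (S r₀)) :
    ∃ x : Ω, S x = x ∧ Tendsto (fun n => |g (S^[n] r₀, x)|) atTop (𝓝 0) := by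
  have hpres := rel_iterate_iterate_succ hSclosed hr₀
  obtain ⟨x, hx⟩ := hcomplete (fun n => S^[n] r₀) hpres
    (tendsto_abs_g_of_abs_g_succ_le_geometric hg2 hg3 hα0 hα1
      (abs_g_iterate_succ_le hSclosed hcontr hα0 hr₀))
  have hSx : Tendsto (fun n => |g (S^[n + 1] r₀, S x)|) atTop (𝓝 0) := by
    simpa only [Function.iterate_succ_apply'] using hScont _ x hpres hx
  exact ⟨x, eq_of_tendsto_abs_g hg1 hg2 hg3 hSx (hx.comp (tendsto_add_atTop_nat 1)), hx⟩

end Picard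

theorem relational_BCP_continuous_general {Ω : Type*}
    (g : Ω × Ω → ℝ)
    (hg1 : ∀ r u : Ω, g (r, u) = 0 → r = u)
    (hg2 : ∀ r u : Ω, |g (r, u)| = |g (u, r)|)
    (hg3 : ∀ r u t : Ω, |g (r, u)| ≤ |g (r, t)| + |g (t, u)|)
    (R : Ω → Ω → Prop) (S : Ω → Ω)
    -- (i) Ω is g-R-complete
    (hcomplete : ∀ r : ℕ → Ω, (∀ n, R (r n) (r (n + 1))) →
      Tendsto (fun p : ℕ × ℕ => |g (r p.1, r p.2)|) atTop (nhds 0) →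
      ∃ x : Ω, Tendsto (fun n => |g (r n, x)|) atTop (nhds 0))
    -- (ii) R is S-closed
    (hSclosed : ∀ x y : Ω, R x y → R (S x) (S y))
    -- (iii) Ω(S; R) is nonempty
    (hnonempty : ∃ r₀ : Ω, R r₀ (S r₀))
    -- (iv) S is g-R-continuous
    (hScont : ∀ (r : ℕ → Ω) (x : Ω), (∀ n, R (r n) (r (n + 1))) →
      Tendsto (fun n => |g (r n, x)|) atTop (nhds 0) →
      Tendsto (fun n => |g (S (r n), S x)|) atTop (nhds 0))
    -- (v) S is a topologically R-preserving contraction w.r.t. g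
    (α : ℝ) (hα : α ∈ Set.Ioo (0 : ℝ) 1)
    (hcontr : ∀ x y : Ω, R x y → |g (S x, S y)| ≤ α * |g (x, y)|) :
    (∃ x : Ω, S x = x) ∧
      ∀ r₀ : Ω, R r₀ (S r₀) → ∃ x : Ω, S x = x ∧
        Tendsto (fun n => |g (S^[n] r₀, x)|) atTop (nhds 0) := by
  have picard : ∀ r₀ : Ω, R r₀ (S r₀) → ∃ x : Ω, S x = x ∧
      Tendsto (fun n => |g (S^[n] r₀, x)|) atTop (nhds 0) := fun _ hr₀ =>
    exists_fixedPoint_tendsto_abs_g_iterate hg1 hg2 hg3 hcomplete hSclosed hScont hα.1.le hα.2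
      hcontr hr₀
  obtain ⟨r₀, hr₀⟩ := hnonempty
  exact ⟨(picard r₀ hr₀).imp fun _ => And.left, picard⟩

/-- Relation-theoretic Banach contraction principle in a topological space,
with the `g`-`R`-continuity assumption on `S`. -/
theorem relational_BCP_continuous {Ω : Type*} [TopologicalSpace Ω]
    (g : Ω × Ω → ℝ) (hg_cont : Continuous g)
    (hg1 : ∀ r u : Ω, g (r, u) = 0 → r = u)
    (hg2 : ∀ r u : Ω, |g (r, u)| = |g (u, r)|)
    (hg3 : ∀ r u t : Ω, |g (r, u)| ≤ |g (r, t)| + |g (t, u)|)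
    (R : Ω → Ω → Prop) (S : Ω → Ω)
    -- (i) Ω is g-R-complete
    (hcomplete : ∀ r : ℕ → Ω, (∀ n, R (r n) (r (n + 1))) →
      Tendsto (fun p : ℕ × ℕ => |g (r p.1, r p.2)|) atTop (nhds 0) →
      ∃ x : Ω, Tendsto (fun n => |g (r n, x)|) atTop (nhds 0))
    -- (ii) R is S-closed
    (hSclosed : ∀ x y : Ω, R x y → R (S x) (S y))
    -- (iii) Ω(S; R) is nonempty
    (hnonempty : ∃ r₀ : Ω, R r₀ (S r₀))
    -- (iv) S is g-R-continuous
    (hScont : ∀ (r : ℕ → Ω) (x : Ω), (∀ n, R (r n) (r (n + 1))) →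
      Tendsto (fun n => |g (r n, x)|) atTop (nhds 0) →
      Tendsto (fun n => |g (S (r n), S x)|) atTop (nhds 0))
    -- (v) S is a topologically R-preserving contraction w.r.t. g
    (α : ℝ) (hα : α ∈ Set.Ioo (0 : ℝ) 1)
    (hcontr : ∀ x y : Ω, R x y → |g (S x, S y)| ≤ α * |g (x, y)|) :
    (∃ x : Ω, S x = x) ∧
      ∀ r₀ : Ω, R r₀ (S r₀) → ∃ x : Ω, S x = x ∧
        Tendsto (fun n => |g (S^[n] r₀, x)|) atTop (nhds 0) :=
  relational_BCP_continuous_general g hg1 hg2 hg3 R S hcomplete hSclosed hnonempty hScont α hα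
    hcontr
end

section
/- Let Ω be a topological space, g : Ω × Ω → ℝ a continuous function satisfying (g1) g(r,u) = 0 implies r = u, (g2) |g(r,u)| = |g(u,r)|, and (g3) |g(r,u)| ≤ |g(r,t)| + |g(t,u)| for all r, u, t ∈ Ω, R a binary relation on Ω, and S : Ω → Ω a map such that: (i) Ω is g-R-complete; (ii) R is S-closed; (iii) there exists r₀ ∈ Ω with (r₀, S r₀) ∈ R; (iv) R is g-self-closed; (v) there exists α ∈ (0,1) with |g(Sx, Sy)| ≤ α |g(x,y)| for all (x,y) ∈ R. Then S has a fixed point; moreover, for each r₀ ∈ Ω with (r₀, S r₀) ∈ R, the Picard sequence {Sⁿ r₀} g-converges to a fixed point of S. -/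
/-!
Put `d x y = |g (x, y)|`. Symmetry and the triangle inequality already force `0 ≤ d x y` and
`d x x ≤ 2 d x y`, although `d x x` need not vanish. Along the Picard orbit of a point `r₀` with
`R r₀ (S r₀)` consecutive terms stay `R`-related, so the contraction makes consecutive distances
decay like `αⁿ`, and chaining them gives `d (Sⁿ r₀) (Sᵐ r₀) ≤ 2 d(r₀, S r₀) α^{min n m} / (1 - α)`.
Completeness provides a limit `x`, self-closedness a subsequence `R`-related to `x`, and along it
`d (x, S x) ≤ d (S^{n+1} r₀, x) + α d (Sⁿ r₀, x) → 0`, whence `S x = x`.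
-/

open Filter Topology

section SymmTriangle

variable {Ω : Type*} {d : Ω → Ω → ℝ} {R : Ω → Ω → Prop} {S : Ω → Ω}

theorem nonneg_of_symm_of_triangle (symm : ∀ x y, d x y = d y x)
    (tri : ∀ x y z, d x z ≤ d x y + d y z) (x y : Ω) : 0 ≤ d x y := by
  have hxx := tri x y x
  have hxy := tri x x y
  rw [symm y x] at hxx
  linarith

theorem le_of_step_le_geometric (symm : ∀ x y, d x y = d y x)
    (tri : ∀ x y z, d x z ≤ d x y + d y z) {r : ℕ → Ω} {C α : ℝ} (hα₀ : 0 ≤ α) (hα₁ : α < 1)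
    (hstep : ∀ n, d (r n) (r (n + 1)) ≤ C * α ^ n) (n m : ℕ) :
    d (r n) (r (n + m)) ≤ 2 * C * α ^ n / (1 - α) := by
  have h1α : 0 < 1 - α := by linarith
  have hCα : ∀ n, 0 ≤ C * α ^ n := fun n =>
    (nonneg_of_symm_of_triangle symm tri _ _).trans (hstep n)
  induction m generalizing n with
  | zero =>
    calc d (r n) (r (n + 0)) ≤ d (r n) (r (n + 1)) + d (r (n + 1)) (r n) := tri _ _ _
      _ = 2 * d (r n) (r (n + 1)) := by rw [symm (r (n + 1))]; ring
      _ ≤ 2 * (C * α ^ n) := by gcongr; exact hstep n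
      _ ≤ 2 * C * α ^ n / (1 - α) := by
        rw [← mul_assoc]
        exact le_div_self (by linarith [hCα n]) h1α (by linarith)
  | succ m ih =>
    calc d (r n) (r (n + (m + 1)))
        ≤ d (r n) (r (n + 1)) + d (r (n + 1)) (r (n + 1 + m)) := by
          rw [← add_assoc, add_right_comm]; exact tri _ _ _
      _ ≤ C * α ^ n + 2 * C * α ^ (n + 1) / (1 - α) := add_le_add (hstep n) (ih (n + 1))
      _ ≤ 2 * C * α ^ n / (1 - α) := by
        rw [pow_succ, le_div_iff₀ h1α, add_mul, div_mul_cancel₀ _ h1α.ne']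
        nlinarith [hCα n]

theorem tendsto_prod_atTop_of_step_le_geometric (symm : ∀ x y, d x y = d y x)
    (tri : ∀ x y z, d x z ≤ d x y + d y z) {r : ℕ → Ω} {C α : ℝ} (hα₀ : 0 ≤ α) (hα₁ : α < 1)
    (hstep : ∀ n, d (r n) (r (n + 1)) ≤ C * α ^ n) :
    Tendsto (fun p : ℕ × ℕ => d (r p.1) (r p.2)) atTop (𝓝 0) := by
  have hbound : ∀ n m, d (r n) (r m) ≤ 2 * C * α ^ min n m / (1 - α) := by
    intro n m
    rcases le_total n m with h | h
    · obtain ⟨k, rfl⟩ := Nat.exists_eq_add_of_le h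
      rw [min_eq_left h]
      exact le_of_step_le_geometric symm tri hα₀ hα₁ hstep n k
    · obtain ⟨k, rfl⟩ := Nat.exists_eq_add_of_le h
      rw [min_eq_right h, symm]
      exact le_of_step_le_geometric symm tri hα₀ hα₁ hstep m k
  have hmin : Tendsto (fun p : ℕ × ℕ => min p.1 p.2) atTop atTop :=
    tendsto_atTop_atTop.mpr fun b => ⟨(b, b), fun p hp => le_min hp.1 hp.2⟩
  have hgeom : Tendsto (fun p : ℕ × ℕ => 2 * C * α ^ min p.1 p.2 / (1 - α)) atTop (𝓝 0) := by
    simpa using (((tendsto_pow_atTop_nhds_zero_of_lt_one hα₀ hα₁).comp hmin).const_mul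
      (2 * C)).div_const (1 - α)
  exact squeeze_zero (fun _ => nonneg_of_symm_of_triangle symm tri _ _)
    (fun p => hbound p.1 p.2) hgeom

theorem eq_of_tendsto_of_contraction (symm : ∀ x y, d x y = d y x)
    (tri : ∀ x y z, d x z ≤ d x y + d y z) (sep : ∀ x y, d x y = 0 → x = y)
    {α : ℝ} (contr : ∀ x y, R x y → d (S x) (S y) ≤ α * d x y)
    {y : ℕ → Ω} {x : Ω} (hy : Tendsto (fun n => d (y n) x) atTop (𝓝 0))
    (hSy : Tendsto (fun n => d (S (y n)) x) atTop (𝓝 0)) (hR : ∀ n, R (y n) x) : S x = x := by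
  have hle : ∀ n, d x (S x) ≤ d (S (y n)) x + α * d (y n) x := fun n =>
    calc d x (S x) ≤ d x (S (y n)) + d (S (y n)) (S x) := tri _ _ _
      _ ≤ d (S (y n)) x + α * d (y n) x := by rw [symm x]; gcongr; exact contr _ _ (hR n)
  have hlim : Tendsto (fun n => d (S (y n)) x + α * d (y n) x) atTop (𝓝 0) := by
    simpa using hSy.add (hy.const_mul α)
  have hzero : d x (S x) = 0 :=
    le_antisymm (ge_of_tendsto' hlim hle) (nonneg_of_symm_of_triangle symm tri _ _)
  exact (sep _ _ hzero).symm

theorem rel_iterate_succ (closed : ∀ x y, R x y → R (S x) (S y)) {x : Ω} (h : R x (S x)) (n : ℕ) :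
    R (S^[n] x) (S^[n + 1] x) := by
  induction n with
  | zero => exact h
  | succ n ih =>
    rw [Function.iterate_succ_apply', Function.iterate_succ_apply' S (n + 1)]
    exact closed _ _ ih

theorem dist_iterate_succ_le {α : ℝ} (hα₀ : 0 ≤ α)
    (contr : ∀ x y, R x y → d (S x) (S y) ≤ α * d x y) {x : Ω}
    (hR : ∀ n, R (S^[n] x) (S^[n + 1] x)) (n : ℕ) :
    d (S^[n] x) (S^[n + 1] x) ≤ d x (S x) * α ^ n := by
  induction n with
  | zero => simp
  | succ n ih =>
    calc d (S^[n + 1] x) (S^[n + 1 + 1] x) = d (S (S^[n] x)) (S (S^[n + 1] x)) := by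
          simp only [Function.iterate_succ_apply']
      _ ≤ α * d (S^[n] x) (S^[n + 1] x) := contr _ _ (hR n)
      _ ≤ α * (d x (S x) * α ^ n) := by gcongr
      _ = d x (S x) * α ^ (n + 1) := by ring

theorem exists_fixedPoint_tendsto_iterate (symm : ∀ x y, d x y = d y x)
    (tri : ∀ x y z, d x z ≤ d x y + d y z) (sep : ∀ x y, d x y = 0 → x = y)
    (complete : ∀ r : ℕ → Ω, (∀ n, R (r n) (r (n + 1))) →
      Tendsto (fun p : ℕ × ℕ => d (r p.1) (r p.2)) atTop (𝓝 0) →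
      ∃ x, Tendsto (fun n => d (r n) x) atTop (𝓝 0))
    (closed : ∀ x y, R x y → R (S x) (S y))
    (selfClosed : ∀ (r : ℕ → Ω) (x : Ω), (∀ n, R (r n) (r (n + 1))) →
      Tendsto (fun n => d (r n) x) atTop (𝓝 0) → ∃ φ : ℕ → ℕ, StrictMono φ ∧ ∀ l, R (r (φ l)) x)
    {α : ℝ} (hα₀ : 0 ≤ α) (hα₁ : α < 1) (contr : ∀ x y, R x y → d (S x) (S y) ≤ α * d x y)
    {r₀ : Ω} (h₀ : R r₀ (S r₀)) :
    ∃ x, S x = x ∧ Tendsto (fun n => d (S^[n] r₀) x) atTop (𝓝 0) := by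
  have hR := rel_iterate_succ closed h₀
  have hcauchy := tendsto_prod_atTop_of_step_le_geometric symm tri hα₀ hα₁
    (dist_iterate_succ_le hα₀ contr hR)
  obtain ⟨x, hx⟩ := complete _ hR hcauchy
  obtain ⟨φ, hφ, hφR⟩ := selfClosed _ x hR hx
  have hSφ : Tendsto (fun l => d (S (S^[φ l] r₀)) x) atTop (𝓝 0) := by
    simpa only [Function.comp_def, Function.iterate_succ_apply'] using
      hx.comp ((tendsto_add_atTop_nat 1).comp hφ.tendsto_atTop)
  exact ⟨x, eq_of_tendsto_of_contraction symm tri sep contr (hx.comp hφ.tendsto_atTop) hSφ hφR,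
    hx⟩

end SymmTriangle

theorem relational_BCP_selfClosed_general {Ω : Type*} [TopologicalSpace Ω]
    (g : Ω × Ω → ℝ)
    (hg1 : ∀ r u : Ω, g (r, u) = 0 → r = u)
    (hg2 : ∀ r u : Ω, |g (r, u)| = |g (u, r)|)
    (hg3 : ∀ r u t : Ω, |g (r, u)| ≤ |g (r, t)| + |g (t, u)|)
    (R : Ω → Ω → Prop) (S : Ω → Ω)
    -- (i) Ω is g-R-complete
    (hcomplete : ∀ r : ℕ → Ω, (∀ n, R (r n) (r (n + 1))) →
      Tendsto (fun p : ℕ × ℕ => |g (r p.1, r p.2)|) atTop (nhds 0) →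
      ∃ x : Ω, Tendsto (fun n => |g (r n, x)|) atTop (nhds 0))
    -- (ii) R is S-closed
    (hSclosed : ∀ x y : Ω, R x y → R (S x) (S y))
    -- (iii) Ω(S; R) is nonempty
    (hnonempty : ∃ r₀ : Ω, R r₀ (S r₀))
    -- (iv) R is g-self-closed
    (hselfClosed : ∀ (r : ℕ → Ω) (x : Ω), (∀ n, R (r n) (r (n + 1))) →
      Tendsto (fun n => |g (r n, x)|) atTop (nhds 0) →
      ∃ φ : ℕ → ℕ, StrictMono φ ∧ ∀ l : ℕ, R (r (φ l)) x)
    -- (v) S is a topologically R-preserving contraction w.r.t. g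
    (α : ℝ) (hα : α ∈ Set.Ioo (0 : ℝ) 1)
    (hcontr : ∀ x y : Ω, R x y → |g (S x, S y)| ≤ α * |g (x, y)|) :
    (∃ x : Ω, S x = x) ∧
      ∀ r₀ : Ω, R r₀ (S r₀) → ∃ x : Ω, S x = x ∧
        Tendsto (fun n => |g (S^[n] r₀, x)|) atTop (nhds 0) := by
  have picard : ∀ r₀ : Ω, R r₀ (S r₀) → ∃ x : Ω, S x = x ∧
      Tendsto (fun n => |g (S^[n] r₀, x)|) atTop (nhds 0) := fun r₀ h₀ =>
    exists_fixedPoint_tendsto_iterate (d := fun x y => |g (x, y)|) hg2 (fun x y z => hg3 x z y)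
      (fun x y h => hg1 x y (abs_eq_zero.mp h)) hcomplete hSclosed hselfClosed hα.1.le hα.2
      hcontr h₀
  obtain ⟨r₀, h₀⟩ := hnonempty
  exact ⟨(picard r₀ h₀).imp fun _ => And.left, picard⟩

/-- Relation-theoretic Banach contraction principle in a topological space,
with the `g`-self-closedness assumption on `R`. -/
theorem relational_BCP_selfClosed {Ω : Type*} [TopologicalSpace Ω]
    (g : Ω × Ω → ℝ) (hg_cont : Continuous g)
    (hg1 : ∀ r u : Ω, g (r, u) = 0 → r = u)
    (hg2 : ∀ r u : Ω, |g (r, u)| = |g (u, r)|)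
    (hg3 : ∀ r u t : Ω, |g (r, u)| ≤ |g (r, t)| + |g (t, u)|)
    (R : Ω → Ω → Prop) (S : Ω → Ω)
    -- (i) Ω is g-R-complete
    (hcomplete : ∀ r : ℕ → Ω, (∀ n, R (r n) (r (n + 1))) →
      Tendsto (fun p : ℕ × ℕ => |g (r p.1, r p.2)|) atTop (nhds 0) →
      ∃ x : Ω, Tendsto (fun n => |g (r n, x)|) atTop (nhds 0))
    -- (ii) R is S-closed
    (hSclosed : ∀ x y : Ω, R x y → R (S x) (S y))
    -- (iii) Ω(S; R) is nonempty
    (hnonempty : ∃ r₀ : Ω, R r₀ (S r₀))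
    -- (iv) R is g-self-closed
    (hselfClosed : ∀ (r : ℕ → Ω) (x : Ω), (∀ n, R (r n) (r (n + 1))) →
      Tendsto (fun n => |g (r n, x)|) atTop (nhds 0) →
      ∃ φ : ℕ → ℕ, StrictMono φ ∧ ∀ l : ℕ, R (r (φ l)) x)
    -- (v) S is a topologically R-preserving contraction w.r.t. g
    (α : ℝ) (hα : α ∈ Set.Ioo (0 : ℝ) 1)
    (hcontr : ∀ x y : Ω, R x y → |g (S x, S y)| ≤ α * |g (x, y)|) :
    (∃ x : Ω, S x = x) ∧
      ∀ r₀ : Ω, R r₀ (S r₀) → ∃ x : Ω, S x = x ∧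
        Tendsto (fun n => |g (S^[n] r₀, x)|) atTop (nhds 0) :=
  relational_BCP_selfClosed_general g hg1 hg2 hg3 R S hcomplete hSclosed hnonempty hselfClosed α hα
    hcontr
end

section
/- Let Ω be a topological space, g : Ω × Ω → ℝ a continuous function satisfying (g1) g(r,u) = 0 implies r = u, (g2) |g(r,u)| = |g(u,r)|, and (g3) |g(r,u)| ≤ |g(r,t)| + |g(t,u)| for all r, u, t ∈ Ω, R a binary relation on Ω, and S : Ω → Ω a map such that: (i) Ω is g-R-complete; (ii) R is S-closed; (iii) there exists r₀ ∈ Ω with (r₀, S r₀) ∈ R; (iv) S is g-R-continuous or R is g-self-closed; (v) there exists α ∈ (0,1) with |g(Sx, Sy)| ≤ α |g(x,y)| for all (x,y) ∈ R. If, in addition, the image S(Ω) is Rˢ-connected (for every u, v ∈ S(Ω) there exists a finite sequence p₀ = u, p₁, …, p_t = v with [pᵢ, pᵢ₊₁] ∈ R for each i, i.e., (pᵢ, pᵢ₊₁) ∈ R or (pᵢ₊₁, pᵢ) ∈ R), then S has exactly one fixed point. -/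
/-!
The Picard iterates `Sⁿ r₀` form an `R`-preserving chain whose consecutive distances decay like
`αⁿ`, so they are `g`-Cauchy and converge to some `x`; either hypothesis in (iv) lets the
contraction pass to the limit and forces `S x = x`. For a second fixed point `y`, join `y` to `x`
by an `Rˢ`-path `p` in `S(Ω)`: applying `Sⁿ` fixes the endpoints and shrinks every step by `αⁿ`,
so `|g(y, x)| ≤ αⁿ ∑ |g(pᵢ, pᵢ₊₁)| → 0`.
-/

open Filter Topology Finset Relation

section DislocatedMetric

variable {Ω : Type*}

/-- A dislocated metric (Hitzler): a metric except that `d x x` need not vanish, as is the case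
for `fun x y ↦ |g (x, y)|`. -/
structure IsDislocatedMetric (d : Ω → Ω → ℝ) : Prop where
  nonneg : ∀ x y, 0 ≤ d x y
  eq_of_eq_zero : ∀ {x y}, d x y = 0 → x = y
  symm : ∀ x y, d x y = d y x
  triangle : ∀ x y z, d x z ≤ d x y + d y z

def RelComplete (d : Ω → Ω → ℝ) (R : Ω → Ω → Prop) : Prop :=
  ∀ u : ℕ → Ω, (∀ n, R (u n) (u (n + 1))) →
    Tendsto (fun p : ℕ × ℕ => d (u p.1) (u p.2)) atTop (𝓝 0) →
    ∃ x, Tendsto (fun n => d (u n) x) atTop (𝓝 0)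

def RelContinuous (d : Ω → Ω → ℝ) (R : Ω → Ω → Prop) (S : Ω → Ω) : Prop :=
  ∀ (u : ℕ → Ω) (x : Ω), (∀ n, R (u n) (u (n + 1))) →
    Tendsto (fun n => d (u n) x) atTop (𝓝 0) → Tendsto (fun n => d (S (u n)) (S x)) atTop (𝓝 0)

def RelSelfClosed (d : Ω → Ω → ℝ) (R : Ω → Ω → Prop) : Prop :=
  ∀ (u : ℕ → Ω) (x : Ω), (∀ n, R (u n) (u (n + 1))) →
    Tendsto (fun n => d (u n) x) atTop (𝓝 0) → ∃ φ : ℕ → ℕ, StrictMono φ ∧ ∀ l, R (u (φ l)) x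

section Iterates

variable {R : Ω → Ω → Prop} {S : Ω → Ω}

theorem rel_iterate (hS : ∀ x y, R x y → R (S x) (S y)) {x y : Ω} (h : R x y) (n : ℕ) :
    R (S^[n] x) (S^[n] y) := by
  induction n generalizing x y with
  | zero => exact h
  | succ n ih => exact ih (hS x y h)

theorem symmGen_closed (hS : ∀ x y, R x y → R (S x) (S y)) (x y : Ω) (h : SymmGen R x y) :
    SymmGen R (S x) (S y) :=
  h.imp (hS x y) (hS y x)

theorem dist_iterate_le {d : Ω → Ω → ℝ} {α : ℝ} (hS : ∀ x y, R x y → R (S x) (S y))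
    (hcontr : ∀ x y, R x y → d (S x) (S y) ≤ α * d x y) (hα : 0 ≤ α) {x y : Ω} (h : R x y)
    (n : ℕ) : d (S^[n] x) (S^[n] y) ≤ α ^ n * d x y := by
  induction n generalizing x y with
  | zero => simp
  | succ n ih =>
    calc d (S^[n + 1] x) (S^[n + 1] y) ≤ α ^ n * d (S x) (S y) := ih (hS x y h)
      _ ≤ α ^ n * (α * d x y) := by gcongr; exact hcontr x y h
      _ = α ^ (n + 1) * d x y := by ring

end Iterates

namespace IsDislocatedMetric

variable {d : Ω → Ω → ℝ}

theorem eq_of_le_zero (hd : IsDislocatedMetric d) {x y : Ω} (h : d x y ≤ 0) : x = y :=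
  hd.eq_of_eq_zero (le_antisymm h (hd.nonneg x y))

theorem eq_of_tendsto {ι : Type*} {l : Filter ι} [l.NeBot] (hd : IsDislocatedMetric d)
    {u : ι → Ω} {x y : Ω} (hx : Tendsto (fun i => d (u i) x) l (𝓝 0))
    (hy : Tendsto (fun i => d (u i) y) l (𝓝 0)) : x = y := by
  refine hd.eq_of_le_zero (ge_of_tendsto' (by simpa using hx.add hy) fun i => ?_)
  exact (hd.triangle x (u i) y).trans_eq (by rw [hd.symm x (u i)])

theorem le_sum_Ico (hd : IsDislocatedMetric d) (u : ℕ → Ω) {m n : ℕ} (h : m < n) :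
    d (u m) (u n) ≤ ∑ i ∈ Ico m n, d (u i) (u (i + 1)) := by
  induction n, h using Nat.le_induction with
  | base => simp
  | succ n hmn ih =>
    rw [sum_Ico_succ_top (by omega)]
    linarith [hd.triangle (u m) (u n) (u (n + 1))]

theorem le_of_le_geometric (hd : IsDislocatedMetric d) {u : ℕ → Ω} {C α : ℝ} (hC : 0 ≤ C)
    (hα₀ : 0 ≤ α) (hα₁ : α < 1) (hu : ∀ n, d (u n) (u (n + 1)) ≤ C * α ^ n) {m n : ℕ}
    (h : m < n) : d (u m) (u n) ≤ C / (1 - α) * α ^ m :=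
  calc d (u m) (u n) ≤ ∑ i ∈ Ico m n, C * α ^ i :=
        (hd.le_sum_Ico u h).trans (sum_le_sum fun i _ => hu i)
    _ = C * ∑ i ∈ Ico m n, α ^ i := (mul_sum _ _ _).symm
    _ ≤ C * (α ^ m / (1 - α)) := by gcongr; exact geom_sum_Ico_le_of_lt_one hα₀ hα₁
    _ = C / (1 - α) * α ^ m := by ring

theorem tendsto_of_le_geometric (hd : IsDislocatedMetric d) {u : ℕ → Ω} {C α : ℝ} (hC : 0 ≤ C)
    (hα₀ : 0 ≤ α) (hα₁ : α < 1) (hu : ∀ n, d (u n) (u (n + 1)) ≤ C * α ^ n) :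
    Tendsto (fun p : ℕ × ℕ => d (u p.1) (u p.2)) atTop (𝓝 0) := by
  set B := C / (1 - α)
  have hbound : ∀ m n, d (u m) (u n) ≤ B * α ^ m + B * α ^ n := fun m n => by
    -- pass through a later index, since `d (u n) (u n)` need not vanish
    calc d (u m) (u n) ≤ d (u m) (u (m + n + 1)) + d (u n) (u (m + n + 1)) :=
          hd.symm (u (m + n + 1)) (u n) ▸ hd.triangle _ _ _
      _ ≤ B * α ^ m + B * α ^ n := add_le_add
          (hd.le_of_le_geometric hC hα₀ hα₁ hu (by omega))
          (hd.le_of_le_geometric hC hα₀ hα₁ hu (by omega))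
  have hpow := tendsto_pow_atTop_nhds_zero_of_lt_one hα₀ hα₁
  have hlim : Tendsto (fun p : ℕ × ℕ => B * α ^ p.1 + B * α ^ p.2) atTop (𝓝 0) := by
    rw [← prod_atTop_atTop_eq]
    simpa using ((hpow.comp tendsto_fst).const_mul B).add ((hpow.comp tendsto_snd).const_mul B)
  exact squeeze_zero (fun _ => hd.nonneg _ _) (fun p => hbound p.1 p.2) hlim

variable {R : Ω → Ω → Prop} {S : Ω → Ω} {α : ℝ}

theorem isFixedPt_of_relContinuous (hd : IsDislocatedMetric d) (hS : RelContinuous d R S)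
    {u : ℕ → Ω} (hR : ∀ n, R (u n) (u (n + 1))) (hu : ∀ n, u (n + 1) = S (u n)) {x : Ω}
    (hx : Tendsto (fun n => d (u n) x) atTop (𝓝 0)) : S x = x := by
  refine hd.eq_of_tendsto (u := fun n => u (n + 1)) ?_ (hx.comp (tendsto_add_atTop_nat 1))
  simpa only [hu] using hS u x hR hx

theorem isFixedPt_of_relSelfClosed (hd : IsDislocatedMetric d) (hR_closed : RelSelfClosed d R)
    (hcontr : ∀ x y, R x y → d (S x) (S y) ≤ α * d x y) {u : ℕ → Ω}
    (hR : ∀ n, R (u n) (u (n + 1))) (hu : ∀ n, u (n + 1) = S (u n)) {x : Ω}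
    (hx : Tendsto (fun n => d (u n) x) atTop (𝓝 0)) : S x = x := by
  obtain ⟨φ, hφ, hφR⟩ := hR_closed u x hR hx
  have hφx := hx.comp hφ.tendsto_atTop
  have hSx : Tendsto (fun l => d (u (φ l + 1)) (S x)) atTop (𝓝 0) := by
    refine squeeze_zero (fun _ => hd.nonneg _ _) (fun l => ?_) (by simpa using hφx.const_mul α)
    rw [hu]
    exact hcontr _ _ (hφR l)
  exact hd.eq_of_tendsto hSx (hx.comp ((tendsto_add_atTop_nat 1).comp hφ.tendsto_atTop))

theorem exists_isFixedPt (hd : IsDislocatedMetric d) (hcomplete : RelComplete d R)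
    (hS : ∀ x y, R x y → R (S x) (S y)) {r₀ : Ω} (hr₀ : R r₀ (S r₀))
    (hiv : RelContinuous d R S ∨ RelSelfClosed d R) (hα₀ : 0 ≤ α) (hα₁ : α < 1)
    (hcontr : ∀ x y, R x y → d (S x) (S y) ≤ α * d x y) : ∃ x, S x = x := by
  set u : ℕ → Ω := fun n => S^[n] r₀
  have hu : ∀ n, u (n + 1) = S (u n) := fun n => Function.iterate_succ_apply' S n r₀
  have hR : ∀ n, R (u n) (u (n + 1)) := fun n => by
    simpa only [u, Function.iterate_succ_apply] using rel_iterate hS hr₀ n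
  have hgeom : ∀ n, d (u n) (u (n + 1)) ≤ d r₀ (S r₀) * α ^ n := fun n => by
    simpa only [u, Function.iterate_succ_apply, mul_comm] using dist_iterate_le hS hcontr hα₀ hr₀ n
  obtain ⟨x, hx⟩ := hcomplete u hR (hd.tendsto_of_le_geometric (hd.nonneg _ _) hα₀ hα₁ hgeom)
  rcases hiv with hcont | hclosed
  · exact ⟨x, hd.isFixedPt_of_relContinuous hcont hR hu hx⟩
  · exact ⟨x, hd.isFixedPt_of_relSelfClosed hclosed hcontr hR hu hx⟩

theorem eq_of_isFixedPt_of_symmGen_chain (hd : IsDislocatedMetric d)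
    (hS : ∀ x y, R x y → R (S x) (S y)) (hα₀ : 0 ≤ α) (hα₁ : α < 1)
    (hcontr : ∀ x y, R x y → d (S x) (S y) ≤ α * d x y) {x y : Ω} (hx : S x = x)
    (hy : S y = y) {t : ℕ} {p : ℕ → Ω} (hp₀ : p 0 = x) (hpt : p t = y)
    (hp : ∀ i < t, SymmGen R (p i) (p (i + 1))) : x = y := by
  rcases Nat.eq_zero_or_pos t with rfl | ht
  · exact hp₀.symm.trans hpt
  have hcontr' : ∀ a b, SymmGen R a b → d (S a) (S b) ≤ α * d a b := by
    rintro a b (h | h)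
    · exact hcontr a b h
    · simpa only [hd.symm a b, hd.symm (S a)] using hcontr b a h
  set D := ∑ i ∈ Ico 0 t, d (p i) (p (i + 1))
  have hbound : ∀ n, d x y ≤ α ^ n * D := fun n =>
    calc d x y = d (S^[n] (p 0)) (S^[n] (p t)) := by
          rw [hp₀, hpt, Function.iterate_fixed hx, Function.iterate_fixed hy]
      _ ≤ ∑ i ∈ Ico 0 t, d (S^[n] (p i)) (S^[n] (p (i + 1))) :=
          hd.le_sum_Ico (fun i => S^[n] (p i)) ht
      _ ≤ ∑ i ∈ Ico 0 t, α ^ n * d (p i) (p (i + 1)) := sum_le_sum fun i hi =>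
          dist_iterate_le (symmGen_closed hS) hcontr' hα₀ (hp i (mem_Ico.mp hi).2) n
      _ = α ^ n * D := (mul_sum _ _ _).symm
  have hlim : Tendsto (fun n : ℕ => α ^ n * D) atTop (𝓝 0) := by
    simpa using (tendsto_pow_atTop_nhds_zero_of_lt_one hα₀ hα₁).mul_const D
  exact hd.eq_of_le_zero (ge_of_tendsto' hlim hbound)

end IsDislocatedMetric

end DislocatedMetric

theorem relational_BCP_unique_general {Ω : Type*}
    (g : Ω × Ω → ℝ)
    (hg1 : ∀ r u : Ω, g (r, u) = 0 → r = u)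
    (hg2 : ∀ r u : Ω, |g (r, u)| = |g (u, r)|)
    (hg3 : ∀ r u t : Ω, |g (r, u)| ≤ |g (r, t)| + |g (t, u)|)
    (R : Ω → Ω → Prop) (S : Ω → Ω)
    -- (i) Ω is g-R-complete
    (hcomplete : ∀ r : ℕ → Ω, (∀ n, R (r n) (r (n + 1))) →
      Tendsto (fun p : ℕ × ℕ => |g (r p.1, r p.2)|) atTop (nhds 0) →
      ∃ x : Ω, Tendsto (fun n => |g (r n, x)|) atTop (nhds 0))
    -- (ii) R is S-closed
    (hSclosed : ∀ x y : Ω, R x y → R (S x) (S y))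
    -- (iii) Ω(S; R) is nonempty
    (hnonempty : ∃ r₀ : Ω, R r₀ (S r₀))
    -- (iv) S is g-R-continuous or R is g-self-closed
    (hiv : (∀ (r : ℕ → Ω) (x : Ω), (∀ n, R (r n) (r (n + 1))) →
        Tendsto (fun n => |g (r n, x)|) atTop (nhds 0) →
        Tendsto (fun n => |g (S (r n), S x)|) atTop (nhds 0)) ∨
      (∀ (r : ℕ → Ω) (x : Ω), (∀ n, R (r n) (r (n + 1))) →
        Tendsto (fun n => |g (r n, x)|) atTop (nhds 0) →
        ∃ φ : ℕ → ℕ, StrictMono φ ∧ ∀ l : ℕ, R (r (φ l)) x))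
    -- (v) S is a topologically R-preserving contraction w.r.t. g
    (α : ℝ) (hα : α ∈ Set.Ioo (0 : ℝ) 1)
    (hcontr : ∀ x y : Ω, R x y → |g (S x, S y)| ≤ α * |g (x, y)|)
    -- S(Ω) is Rˢ-connected
    (hconn : ∀ u v : Ω, u ∈ Set.range S → v ∈ Set.range S →
      ∃ (t : ℕ) (p : ℕ → Ω), p 0 = u ∧ p t = v ∧
        ∀ i < t, R (p i) (p (i + 1)) ∨ R (p (i + 1)) (p i)) :
    ∃! x : Ω, S x = x := by
  have hd : IsDislocatedMetric fun x y => |g (x, y)| :=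
    ⟨fun _ _ => abs_nonneg _, fun h => hg1 _ _ (abs_eq_zero.mp h), hg2, fun x y z => hg3 x z y⟩
  obtain ⟨r₀, hr₀⟩ := hnonempty
  obtain ⟨x, hx⟩ := hd.exists_isFixedPt hcomplete hSclosed hr₀ hiv hα.1.le hα.2 hcontr
  refine ⟨x, hx, fun y hy => ?_⟩
  obtain ⟨t, p, hp₀, hpt, hp⟩ := hconn y x ⟨y, hy⟩ ⟨x, hx⟩
  exact hd.eq_of_isFixedPt_of_symmGen_chain hSclosed hα.1.le hα.2 hcontr hy hx hp₀ hpt hp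

/-- Uniqueness of the fixed point under `Rˢ`-connectedness of `S(Ω)`:
under the assumptions of the relation-theoretic Banach contraction principle
together with the path-connectedness of the image of `S` under the symmetric
closure of `R`, the mapping `S` has exactly one fixed point. -/
theorem relational_BCP_unique {Ω : Type*} [TopologicalSpace Ω]
    (g : Ω × Ω → ℝ) (hg_cont : Continuous g)
    (hg1 : ∀ r u : Ω, g (r, u) = 0 → r = u)
    (hg2 : ∀ r u : Ω, |g (r, u)| = |g (u, r)|)
    (hg3 : ∀ r u t : Ω, |g (r, u)| ≤ |g (r, t)| + |g (t, u)|)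
    (R : Ω → Ω → Prop) (S : Ω → Ω)
    -- (i) Ω is g-R-complete
    (hcomplete : ∀ r : ℕ → Ω, (∀ n, R (r n) (r (n + 1))) →
      Tendsto (fun p : ℕ × ℕ => |g (r p.1, r p.2)|) atTop (nhds 0) →
      ∃ x : Ω, Tendsto (fun n => |g (r n, x)|) atTop (nhds 0))
    -- (ii) R is S-closed
    (hSclosed : ∀ x y : Ω, R x y → R (S x) (S y))
    -- (iii) Ω(S; R) is nonempty
    (hnonempty : ∃ r₀ : Ω, R r₀ (S r₀))
    -- (iv) S is g-R-continuous or R is g-self-closed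
    (hiv : (∀ (r : ℕ → Ω) (x : Ω), (∀ n, R (r n) (r (n + 1))) →
        Tendsto (fun n => |g (r n, x)|) atTop (nhds 0) →
        Tendsto (fun n => |g (S (r n), S x)|) atTop (nhds 0)) ∨
      (∀ (r : ℕ → Ω) (x : Ω), (∀ n, R (r n) (r (n + 1))) →
        Tendsto (fun n => |g (r n, x)|) atTop (nhds 0) →
        ∃ φ : ℕ → ℕ, StrictMono φ ∧ ∀ l : ℕ, R (r (φ l)) x))
    -- (v) S is a topologically R-preserving contraction w.r.t. g
    (α : ℝ) (hα : α ∈ Set.Ioo (0 : ℝ) 1)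
    (hcontr : ∀ x y : Ω, R x y → |g (S x, S y)| ≤ α * |g (x, y)|)
    -- S(Ω) is Rˢ-connected
    (hconn : ∀ u v : Ω, u ∈ Set.range S → v ∈ Set.range S →
      ∃ (t : ℕ) (p : ℕ → Ω), p 0 = u ∧ p t = v ∧
        ∀ i < t, R (p i) (p (i + 1)) ∨ R (p (i + 1)) (p i)) :
    ∃! x : Ω, S x = x :=
  relational_BCP_unique_general g hg1 hg2 hg3 R S hcomplete hSclosed hnonempty hiv α hα hcontr hconn
end

section
/- Let (Ω, d) be a metric space equipped with a partial order ≼ and let S : Ω → Ω be a map such that: (i) every ≼-increasing Cauchy sequence in Ω (a sequence with rₙ ≼ rₙ₊₁ for all n) converges; (ii) S is ≼-preserving, i.e., x ≼ y implies S x ≼ S y; (iii) there exists r₀ ∈ Ω with r₀ ≼ S r₀; (iv) either S is continuous along ≼-increasing convergent sequences (for every ≼-increasing sequence {rₙ} converging to r, {S rₙ} converges to S r) or ≼ is d-self-closed (for every ≼-increasing sequence {rₙ} converging to r there is a subsequence {r_{n_l}} with r_{n_l} ≼ r for all l); (v) there exists α ∈ (0,1) with d(Sx, Sy) ≤ α d(x,y)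 whenever x ≼ y. Then S has a fixed point, and for each r₀ ∈ Ω with r₀ ≼ S r₀ the Picard sequence {Sⁿ r₀} converges to a fixed point of S. -/
open Filter

/-- Order-theoretic Banach contraction principle in a metric space equipped
with a partial order: existence of a fixed point and convergence of Picard
sequences started at points `r₀` with `r₀ ≼ S r₀`. -/
theorem ordered_metric_BCP {Ω : Type*} [MetricSpace Ω] [PartialOrder Ω]
    (S : Ω → Ω)
    -- (i) every ≼-increasing Cauchy sequence converges
    (hcomplete : ∀ r : ℕ → Ω, (∀ n, r n ≤ r (n + 1)) → CauchySeq r →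
      ∃ x : Ω, Tendsto r atTop (nhds x))
    -- (ii) S is ≼-preserving
    (hSmono : ∀ x y : Ω, x ≤ y → S x ≤ S y)
    -- (iii) there exists r₀ with r₀ ≼ S r₀
    (hnonempty : ∃ r₀ : Ω, r₀ ≤ S r₀)
    -- (iv) S is continuous along ≼-increasing convergent sequences or
    --      ≼ is d-self-closed
    (hiv : (∀ (r : ℕ → Ω) (x : Ω), (∀ n, r n ≤ r (n + 1)) →
        Tendsto r atTop (nhds x) →
        Tendsto (fun n => S (r n)) atTop (nhds (S x))) ∨
      (∀ (r : ℕ → Ω) (x : Ω), (∀ n, r n ≤ r (n + 1)) →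
        Tendsto r atTop (nhds x) →
        ∃ φ : ℕ → ℕ, StrictMono φ ∧ ∀ l : ℕ, r (φ l) ≤ x))
    -- (v) S is a contraction on comparable pairs
    (α : ℝ) (hα : α ∈ Set.Ioo (0 : ℝ) 1)
    (hcontr : ∀ x y : Ω, x ≤ y → dist (S x) (S y) ≤ α * dist x y) :
    (∃ x : Ω, S x = x) ∧
      ∀ r₀ : Ω, r₀ ≤ S r₀ → ∃ x : Ω, S x = x ∧
        Tendsto (fun n => S^[n] r₀) atTop (nhds x) := by

  obtain ⟨hα0, hα1⟩ := hα
  have key : ∀ r₀ : Ω, r₀ ≤ S r₀ → ∃ x : Ω, S x = x ∧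
      Tendsto (fun n => S^[n] r₀) atTop (nhds x) := by
    intro r₀ h₀
    set r : ℕ → Ω := fun n => S^[n] r₀ with hr
    have hsucc : ∀ n, r (n + 1) = S (r n) := by
      intro n; simp [hr, Function.iterate_succ_apply']
    have hmono : ∀ n, r n ≤ r (n + 1) := by
      intro n
      induction n with
      | zero => simpa [hr] using h₀
      | succ k ih => rw [hsucc, hsucc]; exact hSmono _ _ ih
    have hdist : ∀ n, dist (r n) (r (n + 1)) ≤ dist r₀ (S r₀) * α ^ n := by
      intro n
      induction n with
      | zero => simp [hr]
      | succ k ih =>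
        rw [hsucc, hsucc]
        calc dist (S (r k)) (S (r (k+1))) ≤ α * dist (r k) (r (k+1)) :=
              hcontr _ _ (hmono k)
          _ ≤ α * (dist r₀ (S r₀) * α ^ k) :=
              mul_le_mul_of_nonneg_left ih (le_of_lt hα0)
          _ = dist r₀ (S r₀) * α ^ (k+1) := by ring
    have hcauchy : CauchySeq r := cauchySeq_of_le_geometric α _ hα1 hdist
    obtain ⟨x, hx⟩ := hcomplete r hmono hcauchy
    have hfix : S x = x := by
      rcases hiv with hcont | hclosed
      · have h1 : Tendsto (fun n => S (r n)) atTop (nhds (S x)) :=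
          hcont r x hmono hx
        have h2 : Tendsto (fun n => S (r n)) atTop (nhds x) := by
          have := hx.comp (tendsto_add_atTop_nat 1)
          simpa [Function.comp_def, ← hsucc] using this
        exact tendsto_nhds_unique h1 h2
      · obtain ⟨φ, hφ, hle⟩ := hclosed r x hmono hx
        have h2 : Tendsto (fun l => S (r (φ l))) atTop (nhds x) := by
          have h3 : Tendsto (fun l => r (φ l + 1)) atTop (nhds x) := by
            have := hx.comp (tendsto_atTop_mono (fun l => (hφ.id_le l).trans (Nat.le_succ _))
              tendsto_id)
            exact hx.comp ((tendsto_add_atTop_nat 1).comp hφ.tendsto_atTop)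
          simpa [hsucc] using h3
        have h1 : Tendsto (fun l => S (r (φ l))) atTop (nhds (S x)) := by
          rw [tendsto_iff_dist_tendsto_zero]
          have hb : ∀ l, dist (S (r (φ l))) (S x) ≤ α * dist (r (φ l)) x :=
            fun l => hcontr _ _ (hle l)
          have hd : Tendsto (fun l => α * dist (r (φ l)) x) atTop (nhds 0) := by
            have : Tendsto (fun l => dist (r (φ l)) x) atTop (nhds 0) :=
              tendsto_iff_dist_tendsto_zero.mp (hx.comp hφ.tendsto_atTop)
            simpa using this.const_mul α
          exact squeeze_zero (fun l => dist_nonneg) hb hd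
        exact tendsto_nhds_unique h1 h2
    exact ⟨x, hfix, hx⟩
  obtain ⟨r₀, h₀⟩ := hnonempty
  obtain ⟨x, hfix, -⟩ := key r₀ h₀
  exact ⟨⟨x, hfix⟩, key⟩
end

section
/- Let ζ ∈ (1, 2] and let h : [0,1] × ℝ → ℝ be a continuous function such that (i) for each t ∈ [0,1], the map x ↦ h(t,x) is nondecreasing, and (ii) there exists α ∈ (0,1) such that for all t ∈ [0,1] and all x, y ∈ ℝ with x ≤ y, |h(t,x) − h(t,y)| ≤ (α Γ(ζ+1)/4) |x − y|, where Γ denotes the Gamma function. Define the operator T on the space C([0,1], ℝ) of continuous real-valued functions on [0,1] by (T u)(t) = (1/Γ(ζ)) ∫₀ᵗ (t − s)^{ζ−1} h(s, u(s)) ds + (2t/Γ(ζ)) ∫₀¹ ( ∫₀ˢ (s − m)^{ζ−1} h(m, u(m)) dm ) ds. Then there exists u ∈ C([0,1], ℝ) with T u = u; that is, the nonlinear fractional boundary value problem D^ζ f(t) = h(t, f(t)) with f(0) = 0 and I f(1) = f'(0) admits a solution in C([0,1], ℝ). -/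
/-!
`T` is a contraction of `C([0,1], ℝ)` with constant `α`. If `|u - v| ≤ d` on `[0,1]`, then
`|h(s, u s) - h(s, v s)| ≤ α Γ(ζ+1) d / 4`, and integrating the kernel `(t - s)^(ζ-1)` gives
`|T u - T v| ≤ (α d / 4) (1 + 2 / (Γ(ζ) (ζ+1))) ≤ 3 α d / 4`, because
`Γ(ζ) (ζ+1) ≥ Γ(ζ+1) ≥ Γ(2) = 1` for `ζ ≥ 1`. Banach's fixed point theorem gives the solution.
Since `h` is only continuous on `[0,1] × ℝ`, it is first replaced by `(t, x) ↦ h(proj t, x)`,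
where `proj` is the projection of `ℝ` onto `[0,1]`.
-/

open Real Set

/-- The integral operator associated with the Caputo fractional boundary value
problem `D^ζ f(t) = h(t, f(t))`, `f(0) = 0`, `I f(1) = f'(0)`:
`(T u)(t) = (1/Γ(ζ)) ∫₀ᵗ (t−s)^{ζ−1} h(s,u(s)) ds
  + (2t/Γ(ζ)) ∫₀¹ (∫₀ˢ (s−m)^{ζ−1} h(m,u(m)) dm) ds`. -/
noncomputable def fracOp (ζ : ℝ) (h : ℝ → ℝ → ℝ) (u : ℝ → ℝ) : ℝ → ℝ :=
  fun t =>
    (1 / Real.Gamma ζ) * ∫ s in (0 : ℝ)..t, (t - s) ^ (ζ - 1) * h s (u s) +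
      (2 * t / Real.Gamma ζ) *
        ∫ s in (0 : ℝ)..1, ∫ m in (0 : ℝ)..s, (s - m) ^ (ζ - 1) * h m (u m)

open Function intervalIntegral

/-- `Γ(ζ)` times the Riemann–Liouville integral of order `ζ` of `g`. -/
noncomputable def rlKernelIntegral (ζ : ℝ) (g : ℝ → ℝ) (t : ℝ) : ℝ :=
  ∫ s in (0 : ℝ)..t, (t - s) ^ (ζ - 1) * g s

lemma Real.one_le_Gamma_add_one {ζ : ℝ} (hζ : 1 ≤ ζ) : 1 ≤ Gamma (ζ + 1) := by
  calc 1 = Gamma 2 := Gamma_two.symm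
    _ ≤ Gamma (ζ + 1) :=
      Gamma_strictMonoOn_Ici.monotoneOn self_mem_Ici (by simp only [mem_Ici]; linarith)
        (by linarith)

lemma integral_sub_rpow {ζ : ℝ} (hζ : 0 < ζ) (t : ℝ) :
    ∫ s in (0 : ℝ)..t, (t - s) ^ (ζ - 1) = t ^ ζ / ζ := by
  rw [integral_comp_sub_left (fun x => x ^ (ζ - 1)) t, sub_self, sub_zero,
    integral_rpow (Or.inl (by linarith)), sub_add_cancel, zero_rpow hζ.ne', sub_zero]

section RLKernel

variable {ζ : ℝ} {g g₁ g₂ : ℝ → ℝ}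

lemma continuous_rpow_sub_mul (hζ : 1 ≤ ζ) (hg : Continuous g) :
    Continuous (uncurry fun t s : ℝ => (t - s) ^ (ζ - 1) * g s) :=
  ((continuous_rpow_const (by linarith)).comp (continuous_fst.sub continuous_snd)).mul
    (hg.comp continuous_snd)

lemma intervalIntegrable_rpow_sub_mul (hζ : 1 ≤ ζ) (hg : Continuous g) (t a b : ℝ) :
    IntervalIntegrable (fun s => (t - s) ^ (ζ - 1) * g s) MeasureTheory.volume a b :=
  ((continuous_rpow_sub_mul hζ hg).comp (continuous_const.prodMk continuous_id)).intervalIntegrable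
    a b

lemma continuous_rlKernelIntegral (hζ : 1 ≤ ζ) (hg : Continuous g) :
    Continuous (rlKernelIntegral ζ g) :=
  continuous_parametric_intervalIntegral_of_continuous (continuous_rpow_sub_mul hζ hg)
    continuous_id

lemma rlKernelIntegral_sub (hζ : 1 ≤ ζ) (hg₁ : Continuous g₁) (hg₂ : Continuous g₂) (t : ℝ) :
    rlKernelIntegral ζ (g₁ - g₂) t = rlKernelIntegral ζ g₁ t - rlKernelIntegral ζ g₂ t := by
  simp only [rlKernelIntegral, Pi.sub_apply, mul_sub]
  exact integral_sub (intervalIntegrable_rpow_sub_mul hζ hg₁ t 0 t)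
    (intervalIntegrable_rpow_sub_mul hζ hg₂ t 0 t)

lemma abs_rlKernelIntegral_le (hζ : 1 ≤ ζ) (hg : Continuous g) {t C : ℝ} (ht : 0 ≤ t)
    (hC : ∀ s ∈ Icc 0 t, |g s| ≤ C) : |rlKernelIntegral ζ g t| ≤ C * t ^ ζ / ζ :=
  calc |rlKernelIntegral ζ g t|
      ≤ ∫ s in (0 : ℝ)..t, |(t - s) ^ (ζ - 1) * g s| := abs_integral_le_integral_abs ht
    _ ≤ ∫ s in (0 : ℝ)..t, (t - s) ^ (ζ - 1) * C := by
        refine integral_mono_on ht (intervalIntegrable_rpow_sub_mul hζ hg t 0 t).abs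
          (intervalIntegrable_rpow_sub_mul hζ continuous_const t 0 t) fun s hs => ?_
        have hk : 0 ≤ (t - s) ^ (ζ - 1) := rpow_nonneg (sub_nonneg.2 hs.2) _
        rw [abs_mul, abs_of_nonneg hk]
        exact mul_le_mul_of_nonneg_left (hC s hs) hk
    _ = C * t ^ ζ / ζ := by
        rw [integral_mul_const, integral_sub_rpow (by linarith)]
        ring

lemma abs_integral_rlKernelIntegral_le (hζ : 1 ≤ ζ) (hg : Continuous g) {C : ℝ}
    (hC : ∀ s ∈ Icc (0 : ℝ) 1, |g s| ≤ C) :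
    |∫ s in (0 : ℝ)..1, rlKernelIntegral ζ g s| ≤ C / (ζ * (ζ + 1)) :=
  calc |∫ s in (0 : ℝ)..1, rlKernelIntegral ζ g s|
      ≤ ∫ s in (0 : ℝ)..1, |rlKernelIntegral ζ g s| := abs_integral_le_integral_abs zero_le_one
    _ ≤ ∫ s in (0 : ℝ)..1, C / ζ * s ^ ζ := by
        refine integral_mono_on zero_le_one
          ((continuous_rlKernelIntegral hζ hg).abs.intervalIntegrable _ _)
          ((continuous_const.mul (continuous_rpow_const (by linarith))).intervalIntegrable _ _)
          fun s hs => ?_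
        refine (abs_rlKernelIntegral_le (C := C) hζ hg hs.1 fun r hr => ?_).trans_eq (by ring)
        exact hC r ⟨hr.1, hr.2.trans hs.2⟩
    _ = C / (ζ * (ζ + 1)) := by
        rw [integral_const_mul, integral_rpow (Or.inl (by linarith)), one_rpow,
          zero_rpow (by linarith), sub_zero]
        field_simp

end RLKernel

section FracOp

variable {ζ : ℝ} {h : ℝ → ℝ → ℝ} {u v : ℝ → ℝ}

/-- The binder of the first `∫` in `fracOp` extends to the end of the line, so the second summand
is integrated over `[0, t]` as a constant and picks up a factor `t`. -/
lemma fracOp_eq (hζ : 1 ≤ ζ) (hu : Continuous fun s => h s (u s)) (t : ℝ) :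
    fracOp ζ h u t = (rlKernelIntegral ζ (fun s => h s (u s)) t +
      t * (2 * t / Gamma ζ * ∫ s in (0 : ℝ)..1, rlKernelIntegral ζ (fun s => h s (u s)) s)) /
        Gamma ζ := by
  rw [fracOp, integral_add (intervalIntegrable_rpow_sub_mul hζ hu t 0 t) intervalIntegrable_const,
    integral_const, smul_eq_mul, sub_zero, one_div_mul_eq_div]
  rfl

lemma continuous_fracOp (hζ : 1 ≤ ζ) (hu : Continuous fun s => h s (u s)) :
    Continuous (fracOp ζ h u) := by
  have hR := continuous_rlKernelIntegral hζ hu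
  rw [funext (fracOp_eq hζ hu)]
  fun_prop

lemma fracOp_congr {h' : ℝ → ℝ → ℝ} {u' : ℝ → ℝ}
    (heq : ∀ s ∈ Icc (0 : ℝ) 1, h s (u s) = h' s (u' s)) {t : ℝ} (ht : t ∈ Icc (0 : ℝ) 1) :
    fracOp ζ h u t = fracOp ζ h' u' t := by
  have hR : ∀ s ∈ Icc (0 : ℝ) 1, ∀ r ∈ uIcc 0 s,
      (s - r) ^ (ζ - 1) * h r (u r) = (s - r) ^ (ζ - 1) * h' r (u' r) := by
    intro s hs r hr
    rw [uIcc_of_le hs.1] at hr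
    rw [heq r ⟨hr.1, hr.2.trans hs.2⟩]
  have hI : ∫ s in (0 : ℝ)..1, ∫ m in (0 : ℝ)..s, (s - m) ^ (ζ - 1) * h m (u m) =
      ∫ s in (0 : ℝ)..1, ∫ m in (0 : ℝ)..s, (s - m) ^ (ζ - 1) * h' m (u' m) := by
    refine integral_congr fun s hs => integral_congr (hR s ?_)
    rwa [uIcc_of_le zero_le_one] at hs
  simp only [fracOp, hI]
  congr 1
  exact integral_congr fun s hs => by rw [hR t ht s hs]

lemma abs_fracOp_sub_le (hζ : 1 ≤ ζ) (hu : Continuous fun s => h s (u s))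
    (hv : Continuous fun s => h s (v s)) {M : ℝ}
    (hM : ∀ s ∈ Icc (0 : ℝ) 1, |h s (u s) - h s (v s)| ≤ M) {t : ℝ} (ht : t ∈ Icc (0 : ℝ) 1) :
    |fracOp ζ h u t - fracOp ζ h v t| ≤ M / Gamma (ζ + 1) * (1 + 2 / (Gamma ζ * (ζ + 1))) := by
  set g : ℝ → ℝ := fun s => h s (u s) - h s (v s)
  have hg : Continuous g := hu.sub hv
  have hR : ∀ s, rlKernelIntegral ζ g s = rlKernelIntegral ζ (fun s => h s (u s)) s -
      rlKernelIntegral ζ (fun s => h s (v s)) s :=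
    rlKernelIntegral_sub hζ hu hv
  have hI : ∫ s in (0 : ℝ)..1, rlKernelIntegral ζ g s =
      (∫ s in (0 : ℝ)..1, rlKernelIntegral ζ (fun s => h s (u s)) s) -
        ∫ s in (0 : ℝ)..1, rlKernelIntegral ζ (fun s => h s (v s)) s := by
    rw [← integral_sub ((continuous_rlKernelIntegral hζ hu).intervalIntegrable _ _)
      ((continuous_rlKernelIntegral hζ hv).intervalIntegrable _ _)]
    exact integral_congr fun s _ => hR s
  have hdiff : fracOp ζ h u t - fracOp ζ h v t =
      (rlKernelIntegral ζ g t + t * (2 * t / Gamma ζ * ∫ s in (0 : ℝ)..1,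
        rlKernelIntegral ζ g s)) / Gamma ζ := by
    rw [fracOp_eq hζ hu, fracOp_eq hζ hv, hI, hR t]
    ring
  have hΓ : 0 < Gamma ζ := Gamma_pos_of_pos (by linarith)
  have hM0 : 0 ≤ M := (abs_nonneg _).trans (hM 0 ⟨le_rfl, zero_le_one⟩)
  have hfirst : |rlKernelIntegral ζ g t| ≤ M / ζ := by
    refine (abs_rlKernelIntegral_le hζ hg ht.1 fun s hs => hM s ⟨hs.1, hs.2.trans ht.2⟩).trans ?_
    calc M * t ^ ζ / ζ ≤ M * 1 / ζ := by gcongr; exact rpow_le_one ht.1 ht.2 (by linarith)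
      _ = M / ζ := by rw [mul_one]
  have hsecond : |t * (2 * t / Gamma ζ * ∫ s in (0 : ℝ)..1, rlKernelIntegral ζ g s)| ≤
      2 / Gamma ζ * (M / (ζ * (ζ + 1))) := by
    rw [abs_mul, abs_mul, abs_of_nonneg ht.1, abs_of_nonneg (by have := ht.1; positivity)]
    calc t * (2 * t / Gamma ζ * |∫ s in (0 : ℝ)..1, rlKernelIntegral ζ g s|)
        ≤ 1 * (2 * 1 / Gamma ζ * |∫ s in (0 : ℝ)..1, rlKernelIntegral ζ g s|) := by
          obtain ⟨ht0, ht1⟩ := ht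
          gcongr
      _ ≤ 2 / Gamma ζ * (M / (ζ * (ζ + 1))) := by
          rw [one_mul, mul_one]
          gcongr
          exact abs_integral_rlKernelIntegral_le hζ hg hM
  rw [hdiff, abs_div, abs_of_pos hΓ, Gamma_add_one (by linarith)]
  calc _ ≤ (M / ζ + 2 / Gamma ζ * (M / (ζ * (ζ + 1)))) / Gamma ζ := by
        gcongr
        exact (abs_add_le _ _).trans (add_le_add hfirst hsecond)
    _ = M / (ζ * Gamma ζ) * (1 + 2 / (Gamma ζ * (ζ + 1))) := by
        field_simp

end FracOp

section OnIcc

variable {ζ : ℝ} {h : ℝ → ℝ → ℝ}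

lemma continuous_comp_IccExtend (hh : Continuous (uncurry h)) (u : C(Icc (0 : ℝ) 1, ℝ)) :
    Continuous fun s => h s (IccExtend zero_le_one u s) :=
  hh.comp₂ continuous_id u.continuous.Icc_extend'

variable (hζ : 1 ≤ ζ) (hh : Continuous (uncurry h))

noncomputable def fracOpIcc (u : C(Icc (0 : ℝ) 1, ℝ)) : C(Icc (0 : ℝ) 1, ℝ) :=
  ⟨fun t => fracOp ζ h (IccExtend zero_le_one u) t,
    (continuous_fracOp hζ (continuous_comp_IccExtend hh u)).comp continuous_subtype_val⟩

theorem contractingWith_fracOpIcc {α : ℝ} (hα0 : 0 ≤ α) (hα1 : α < 1)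
    (hlip : ∀ t ∈ Icc (0 : ℝ) 1, ∀ x y, |h t x - h t y| ≤ α * Gamma (ζ + 1) / 4 * |x - y|) :
    ContractingWith ⟨α, hα0⟩ (fracOpIcc hζ hh) := by
  have hΓ1 : Gamma (ζ + 1) = Gamma ζ * ζ := by rw [Gamma_add_one (by linarith)]; ring
  have hΓζ : 1 ≤ Gamma ζ * (ζ + 1) :=
    calc 1 ≤ Gamma ζ * ζ := hΓ1 ▸ one_le_Gamma_add_one hζ
      _ ≤ Gamma ζ * (ζ + 1) := by gcongr; linarith
  refine ⟨by exact_mod_cast hα1, LipschitzWith.of_dist_le_mul fun u v => ?_⟩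
  rw [ContinuousMap.dist_le (by positivity)]
  intro t
  have hM : ∀ s ∈ Icc (0 : ℝ) 1,
      |h s (IccExtend zero_le_one u s) - h s (IccExtend zero_le_one v s)| ≤
        α * Gamma (ζ + 1) / 4 * dist u v :=
    fun s hs => (hlip s hs _ _).trans <| by
      gcongr
      exact (Real.dist_eq _ _).symm.trans_le (ContinuousMap.dist_apply_le_dist (projIcc 0 1 _ s))
  calc dist (fracOpIcc hζ hh u t) (fracOpIcc hζ hh v t)
      ≤ α * Gamma (ζ + 1) / 4 * dist u v / Gamma (ζ + 1) * (1 + 2 / (Gamma ζ * (ζ + 1))) :=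
        (Real.dist_eq _ _).trans_le (abs_fracOp_sub_le hζ (continuous_comp_IccExtend hh u)
          (continuous_comp_IccExtend hh v) hM t.2)
    _ ≤ α * Gamma (ζ + 1) / 4 * dist u v / Gamma (ζ + 1) * (1 + 2) := by
        gcongr
        exact div_le_self zero_le_two hΓζ
    _ ≤ α * dist u v := by
        rw [hΓ1]
        field_simp
        nlinarith [mul_nonneg hα0 (dist_nonneg (x := u) (y := v))]

end OnIcc

theorem frac_bvp_has_solution_general (ζ : ℝ) (hζ : ζ ∈ Set.Ioc (1 : ℝ) 2)
    (h : ℝ → ℝ → ℝ)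
    (h_cont : ContinuousOn (Function.uncurry h) (Set.Icc (0 : ℝ) 1 ×ˢ Set.univ))
    (α : ℝ) (hα : α ∈ Set.Ioo (0 : ℝ) 1)
    (h_lip : ∀ t ∈ Set.Icc (0 : ℝ) 1, ∀ x y : ℝ, x ≤ y →
      |h t x - h t y| ≤ α * Real.Gamma (ζ + 1) / 4 * |x - y|) :
    ∃ u : ℝ → ℝ, ContinuousOn u (Set.Icc (0 : ℝ) 1) ∧
      ∀ t ∈ Set.Icc (0 : ℝ) 1, fracOp ζ h u t = u t := by
  have hζ1 : 1 ≤ ζ := hζ.1.le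
  set k : ℝ → ℝ → ℝ := fun t => h (projIcc 0 1 zero_le_one t)
  have hk : Continuous (uncurry k) :=
    h_cont.comp_continuous (f := fun p : ℝ × ℝ => ((projIcc 0 1 zero_le_one p.1 : ℝ), p.2))
      (by fun_prop) fun p => ⟨(projIcc 0 1 zero_le_one p.1).2, mem_univ _⟩
  have hk_lip : ∀ t ∈ Icc (0 : ℝ) 1, ∀ x y, |k t x - k t y| ≤ α * Gamma (ζ + 1) / 4 * |x - y| := by
    intro t _ x y
    rcases le_total x y with hxy | hyx
    · exact h_lip _ (projIcc 0 1 zero_le_one t).2 x y hxy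
    · rw [abs_sub_comm, abs_sub_comm x]
      exact h_lip _ (projIcc 0 1 zero_le_one t).2 y x hyx
  have hT := contractingWith_fracOpIcc hζ1 hk hα.1.le hα.2 hk_lip
  set u₀ := ContractingWith.fixedPoint _ hT
  refine ⟨IccExtend zero_le_one u₀, u₀.continuous.Icc_extend'.continuousOn, fun t ht => ?_⟩
  calc fracOp ζ h (IccExtend zero_le_one u₀) t
      = fracOp ζ k (IccExtend zero_le_one u₀) t :=
        fracOp_congr (fun s hs => by simp only [k, projIcc_of_mem _ hs]) ht
    _ = fracOpIcc hζ1 hk u₀ ⟨t, ht⟩ := rfl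
    _ = u₀ ⟨t, ht⟩ := by rw [hT.fixedPoint_isFixedPt]
    _ = IccExtend zero_le_one u₀ t := (IccExtend_of_mem _ _ ht).symm

/-- Existence of a solution of the nonlinear fractional boundary value problem:
if `h` is continuous on `[0,1] × ℝ`, nondecreasing in its second variable, and
satisfies `|h(t,x) − h(t,y)| ≤ (α Γ(ζ+1)/4)|x − y|` for comparable `x ≤ y`,
then the operator `T` has a fixed point in `C([0,1], ℝ)`. -/
theorem frac_bvp_has_solution (ζ : ℝ) (hζ : ζ ∈ Set.Ioc (1 : ℝ) 2)
    (h : ℝ → ℝ → ℝ)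
    (h_cont : ContinuousOn (Function.uncurry h) (Set.Icc (0 : ℝ) 1 ×ˢ Set.univ))
    (h_mono : ∀ t ∈ Set.Icc (0 : ℝ) 1, Monotone (h t))
    (α : ℝ) (hα : α ∈ Set.Ioo (0 : ℝ) 1)
    (h_lip : ∀ t ∈ Set.Icc (0 : ℝ) 1, ∀ x y : ℝ, x ≤ y →
      |h t x - h t y| ≤ α * Real.Gamma (ζ + 1) / 4 * |x - y|) :
    ∃ u : ℝ → ℝ, ContinuousOn u (Set.Icc (0 : ℝ) 1) ∧
      ∀ t ∈ Set.Icc (0 : ℝ) 1, fracOp ζ h u t = u t :=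
  frac_bvp_has_solution_general ζ hζ h h_cont α hα h_lip
end
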